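/- arXiv:2004.13798 — 3 statements merged into one kernel-verified Lean document; each statement's English description precedes it below -/
import Mathlib

section
/- The group H with presentation ⟨ {x_m}_{m∈ℤ} ∪ {y_n}_{n∈ℤ} | y_n = x_{n+1}⁻¹ y_{n+1}⁻¹ x_{n+1} for all n ∈ ℤ ⟩ is locally free: every finitely generated subgroup of H is free. Moreover all generators x_m and y_n are nontrivial in H. -/
/-- Relators `y_n⁻¹ x_{n+1}⁻¹ y_{n+1}⁻¹ x_{n+1}` for `n ∈ ℤ`, where `x_m` is
`Sum.inl m` and `y_n` is `Sum.inr n`. -/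
def relsH : Set (FreeGroup (ℤ ⊕ ℤ)) :=
  {r | ∃ n : ℤ, r = (FreeGroup.of (Sum.inr n))⁻¹ * (FreeGroup.of (Sum.inl (n + 1)))⁻¹ *
      (FreeGroup.of (Sum.inr (n + 1)))⁻¹ * FreeGroup.of (Sum.inl (n + 1))}

/-- The group `H = ⟨ x_m, y_n (m,n ∈ ℤ) ∣ y_n = x_{n+1}⁻¹ y_{n+1}⁻¹ x_{n+1} ⟩`. -/
def GroupH := PresentedGroup relsH

noncomputable instance : Group GroupH := by unfold GroupH; infer_instance

/-- The generator `x_m` of `H`. -/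
noncomputable def xg (m : ℤ) : GroupH := PresentedGroup.of (Sum.inl m)

/-- The generator `y_n` of `H`. -/
noncomputable def yg (n : ℤ) : GroupH := PresentedGroup.of (Sum.inr n)

/-!
Solved for `y_{n+1}`, the relation reads `y_{n+1} = x_{n+1} y_n⁻¹ x_{n+1}⁻¹`, so every `y_n` is
obtained from `y_0` by a chain of the bijections `g ↦ x g⁻¹ x⁻¹` and their inverses. A Tietze
transformation therefore eliminates all `y_n` with `n ≠ 0` together with all relators: `H` is free
on `{x_m} ∪ {y_0}`. Local freeness is then Nielsen–Schreier, and `y_n ≠ 1` because those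
bijections fix `1` while `y_0 ≠ 1`.
-/

section Trajectory

variable {α : Type*} (e : ℤ → Equiv.Perm α) (a : α)

/-- The unique `f : ℤ → α` with `f 0 = a` and `f (n + 1) = e n (f n)`. -/
def permTrajectory : ℤ → α
  | .ofNat 0 => a
  | .ofNat (k + 1) => e k (permTrajectory (.ofNat k))
  | .negSucc k => (e (.negSucc k)).symm (permTrajectory (.negSucc k + 1))
termination_by n => n.natAbs
decreasing_by all_goals simp_wf; omega

@[simp]
theorem permTrajectory_zero : permTrajectory e a 0 = a := by
  rw [show (0 : ℤ) = .ofNat 0 from rfl, permTrajectory]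

theorem permTrajectory_add_one (n : ℤ) :
    permTrajectory e a (n + 1) = e n (permTrajectory e a n) := by
  cases n with
  | ofNat k => exact permTrajectory.eq_2 e a k
  | negSucc k => rw [permTrajectory.eq_3 e a k, Equiv.apply_symm_apply]

theorem eq_permTrajectory {f : ℤ → α} (h₀ : f 0 = a) (h : ∀ n, f (n + 1) = e n (f n)) :
    f = permTrajectory e a := by
  funext n
  induction n using Int.induction_on with
  | zero => rw [h₀, permTrajectory_zero]
  | succ i ih => rw [h, permTrajectory_add_one, ih]
  | pred i ih =>
    rw [← (e (-i - 1)).injective.eq_iff, ← h, ← permTrajectory_add_one, sub_add_cancel, ih]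

theorem permTrajectory_ne {b : α} (hb : ∀ n, e n b = b) (ha : a ≠ b) (n : ℤ) :
    permTrajectory e a n ≠ b := by
  induction n using Int.induction_on with
  | zero => rwa [permTrajectory_zero]
  | succ i ih => rwa [permTrajectory_add_one, ← hb i, (e i).injective.ne_iff]
  | pred i ih =>
    rwa [← (e (-i - 1)).injective.ne_iff, ← permTrajectory_add_one, sub_add_cancel, hb]

end Trajectory

section ConjInv

variable {G G' : Type*} [Group G] [Group G']

def conjInv (x : G) : Equiv.Perm G := (Equiv.inv G).trans (MulAut.conj x).toEquiv

@[simp]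
theorem conjInv_apply (x g : G) : conjInv x g = x * g⁻¹ * x⁻¹ := rfl

theorem map_conjInv (f : G →* G') (x g : G) : f (conjInv x g) = conjInv (f x) (f g) := by
  simp

end ConjInv

namespace GroupH

theorem yg_add_one (n : ℤ) : yg (n + 1) = conjInv (xg (n + 1)) (yg n) := by
  have h := PresentedGroup.one_of_mem (rels := relsH) ⟨n, rfl⟩
  simp only [map_mul, map_inv] at h
  change (yg n)⁻¹ * (xg (n + 1))⁻¹ * (yg (n + 1))⁻¹ * xg (n + 1) = 1 at h
  rw [conjInv_apply, eq_comm, ← mul_inv_eq_one]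
  calc xg (n + 1) * (yg n)⁻¹ * (xg (n + 1))⁻¹ * (yg (n + 1))⁻¹
      = xg (n + 1) * ((yg n)⁻¹ * (xg (n + 1))⁻¹ * (yg (n + 1))⁻¹ * xg (n + 1)) *
          (xg (n + 1))⁻¹ := by group
    _ = 1 := by rw [h, mul_one, mul_inv_cancel]

/-- `Sum.inl m` stands for `x_m` and `Sum.inr ()` for `y_0`. -/
noncomputable def yFree : ℤ → FreeGroup (ℤ ⊕ Unit) :=
  permTrajectory (fun n => conjInv (.of (.inl (n + 1)))) (.of (.inr ()))

theorem yFree_add_one (n : ℤ) : yFree (n + 1) = conjInv (.of (.inl (n + 1))) (yFree n) :=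
  permTrajectory_add_one _ _ n

theorem yFree_ne_one (n : ℤ) : yFree n ≠ 1 :=
  permTrajectory_ne _ _ (fun _ => by simp) (FreeGroup.of_ne_one _) n

theorem lift_relsH_eq_one :
    ∀ r ∈ relsH, FreeGroup.lift (Sum.elim (.of ∘ .inl) yFree) r = 1 := by
  rintro _ ⟨n, rfl⟩
  simp [yFree_add_one]

noncomputable def toFree : GroupH →* FreeGroup (ℤ ⊕ Unit) :=
  PresentedGroup.toGroup lift_relsH_eq_one

noncomputable def ofFree : FreeGroup (ℤ ⊕ Unit) →* GroupH :=
  FreeGroup.lift (Sum.elim xg fun _ => yg 0)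

theorem toFree_xg (m : ℤ) : toFree (xg m) = .of (.inl m) := PresentedGroup.toGroup.of _

theorem toFree_yg (n : ℤ) : toFree (yg n) = yFree n := PresentedGroup.toGroup.of _

theorem ofFree_yFree : ofFree ∘ yFree = yg := by
  refine (eq_permTrajectory _ _ ?_ fun n => ?_).trans (eq_permTrajectory _ _ rfl yg_add_one).symm
  · simp [yFree, ofFree]
  · simp only [Function.comp_apply, yFree_add_one, map_conjInv]
    simp [ofFree]

noncomputable def mulEquivFreeGroup : GroupH ≃* FreeGroup (ℤ ⊕ Unit) :=
  MonoidHom.toMulEquiv toFree ofFree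
    (by
      apply PresentedGroup.ext
      rintro (m | n)
      · change ofFree (toFree (xg m)) = xg m
        simp [toFree_xg, ofFree]
      · change ofFree (toFree (yg n)) = yg n
        exact (toFree_yg n).symm ▸ congrFun ofFree_yFree n)
    (FreeGroup.ext_hom _ _ fun
      | .inl m => by simp [ofFree, toFree_xg]
      | .inr () => by simp [ofFree, toFree_yg, yFree])

instance : IsFreeGroup GroupH := .ofMulEquiv mulEquivFreeGroup.symm

theorem xg_ne_one (m : ℤ) : xg m ≠ 1 := by
  rw [← mulEquivFreeGroup.map_ne_one_iff]
  exact (toFree_xg m).symm ▸ FreeGroup.of_ne_one _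

theorem yg_ne_one (n : ℤ) : yg n ≠ 1 := by
  rw [← mulEquivFreeGroup.map_ne_one_iff]
  exact (toFree_yg n).symm ▸ yFree_ne_one n

end GroupH

/-- The group `H` is locally free (every finitely generated subgroup is free),
and all the generators `x_m`, `y_n` are nontrivial in `H`. -/
theorem groupH_locallyFree :
    (∀ K : Subgroup GroupH, K.FG → ∃ X : Type, Nonempty (K ≃* FreeGroup X)) ∧
    (∀ m : ℤ, xg m ≠ 1) ∧ (∀ n : ℤ, yg n ≠ 1) :=
  ⟨fun K _ => ⟨_, ⟨IsFreeGroup.toFreeGroup K⟩⟩, GroupH.xg_ne_one, GroupH.yg_ne_one⟩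
end

section
/- Let H_N be the group with presentation ⟨ {x_m}_{m∈ℤ} ∪ {y_n}_{n≥N} | y_n = x_{n+1}⁻¹ y_{n+1}⁻¹ x_{n+1} for all n ≥ N ⟩. The quotient of H_N by the normal closure of {x_n : n > N} is isomorphic to the free group on the set {x_m}_{m≤N} ∪ {y_N}. Consequently, the set {x_m}_{m≤N} ∪ {y_N} freely generates a free subgroup of H_N. -/
/-- Relators `y_n⁻¹ x_{n+1}⁻¹ y_{n+1}⁻¹ x_{n+1}` for `n ≥ N`, where `x_m` is
`Sum.inl m` (`m ∈ ℤ`) and `y_n` is `Sum.inr n` (`n ≥ N`). -/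
def relsHN (N : ℤ) : Set (FreeGroup (ℤ ⊕ {n : ℤ // N ≤ n})) :=
  {r | ∃ (n : ℤ) (hn : N ≤ n),
    r = (FreeGroup.of (Sum.inr ⟨n, hn⟩))⁻¹ * (FreeGroup.of (Sum.inl (n + 1)))⁻¹ *
      (FreeGroup.of (Sum.inr ⟨n + 1, by omega⟩))⁻¹ * FreeGroup.of (Sum.inl (n + 1))}

/-- The group `H_N = ⟨ x_m (m ∈ ℤ), y_n (n ≥ N) ∣ y_n = x_{n+1}⁻¹ y_{n+1}⁻¹ x_{n+1}, n ≥ N ⟩`. -/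
def GroupHN (N : ℤ) := PresentedGroup (relsHN N)

noncomputable instance (N : ℤ) : Group (GroupHN N) := by unfold GroupHN; infer_instance

/-- The generator `x_m` of `H_N`. -/
noncomputable def xgN (N : ℤ) (m : ℤ) : GroupHN N := PresentedGroup.of (Sum.inl m)

/-- The generator `y_n` of `H_N` (for `n ≥ N`). -/
noncomputable def ygN (N : ℤ) (n : {n : ℤ // N ≤ n}) : GroupHN N := PresentedGroup.of (Sum.inr n)

/-!
Killing `x_n` for `n > N` turns the relations into `y_{n+1} = y_n⁻¹`, so modulo that normal closure
`y_n = y_N^{±1}` according to the parity of `n - N`. Sending `x_m ↦ x_m` for `m ≤ N`, `x_m ↦ 1` for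
`m > N` and `y_n ↦ y^{±1}` in the same way respects the relations and gives a retraction of `H_N`
onto the free group on `{x_m}_{m ≤ N} ∪ {y}` whose kernel is exactly that normal closure; the map
`x_m ↦ x_m, y ↦ y_N` is a section of it, hence injective.
-/

theorem MonoidHom.ker_eq_of_le_of_mk_comp_eq {G H : Type*} [Group G] [Group H] (r : G →* H)
    (s : H →* G) (K : Subgroup G) [K.Normal] (hK : K ≤ r.ker)
    (hsr : (QuotientGroup.mk' K).comp (s.comp r) = QuotientGroup.mk' K) : r.ker = K := by
  refine le_antisymm (fun g hg => ?_) hK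
  rw [← QuotientGroup.eq_one_iff, ← QuotientGroup.mk'_apply, ← hsr]
  simp [MonoidHom.mem_ker.mp hg]

theorem Int.negOnePow_add_one_sub (n m : ℤ) : (n + 1 - m).negOnePow = -(n - m).negOnePow := by
  rw [add_sub_right_comm, Int.negOnePow_succ]

namespace GroupHN

variable (N : ℤ)

noncomputable def retractionOnGen : ℤ ⊕ {n : ℤ // N ≤ n} → FreeGroup ({m : ℤ // m ≤ N} ⊕ Unit)
  | .inl m => if h : m ≤ N then FreeGroup.of (.inl ⟨m, h⟩) else 1
  | .inr n => FreeGroup.of (.inr ()) ^ ((n.1 - N).negOnePow : ℤ)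

theorem retractionOnGen_rels : ∀ r ∈ relsHN N, FreeGroup.lift (retractionOnGen N) r = 1 := by
  rintro r ⟨n, hn, rfl⟩
  simp only [map_mul, map_inv, FreeGroup.lift_apply_of, retractionOnGen, Int.negOnePow_add_one_sub,
    dif_neg (show ¬n + 1 ≤ N by omega), Units.val_neg, zpow_neg, inv_inv, inv_one, mul_one,
    inv_mul_cancel]

noncomputable def retraction : GroupHN N →* FreeGroup ({m : ℤ // m ≤ N} ⊕ Unit) :=
  PresentedGroup.toGroup (retractionOnGen_rels N)

theorem retraction_xgN (m : ℤ) :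
    retraction N (xgN N m) = if h : m ≤ N then FreeGroup.of (.inl ⟨m, h⟩) else 1 :=
  PresentedGroup.toGroup.of _

theorem retraction_ygN (n : {n : ℤ // N ≤ n}) :
    retraction N (ygN N n) = FreeGroup.of (.inr ()) ^ ((n.1 - N).negOnePow : ℤ) :=
  PresentedGroup.toGroup.of _

noncomputable def inclusion : FreeGroup ({m : ℤ // m ≤ N} ⊕ Unit) →* GroupHN N :=
  FreeGroup.lift (Sum.elim (fun m => xgN N m) (fun _ => ygN N ⟨N, le_rfl⟩))

@[simp]
theorem inclusion_of_inl (m : {m : ℤ // m ≤ N}) :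
    inclusion N (FreeGroup.of (.inl m)) = xgN N m :=
  FreeGroup.lift_apply_of

@[simp]
theorem inclusion_of_inr (u : Unit) :
    inclusion N (FreeGroup.of (.inr u)) = ygN N ⟨N, le_rfl⟩ :=
  FreeGroup.lift_apply_of

theorem retraction_comp_inclusion : (retraction N).comp (inclusion N) = MonoidHom.id _ := by
  ext (⟨m, hm⟩ | u)
  · simp [retraction_xgN, hm]
  · simp [retraction_ygN]

theorem leftInverse_retraction_inclusion :
    Function.LeftInverse (retraction N) (inclusion N) :=
  DFunLike.congr_fun (retraction_comp_inclusion N)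

theorem ygN_succ (n : ℤ) (hn : N ≤ n) :
    ygN N ⟨n + 1, by omega⟩ = xgN N (n + 1) * (ygN N ⟨n, hn⟩)⁻¹ * (xgN N (n + 1))⁻¹ := by
  have hrel : (ygN N ⟨n, hn⟩)⁻¹ * (xgN N (n + 1))⁻¹ * (ygN N ⟨n + 1, by omega⟩)⁻¹ *
      xgN N (n + 1) = 1 := by
    have h := PresentedGroup.one_of_mem (rels := relsHN N) ⟨n, hn, rfl⟩
    simp only [map_mul, map_inv] at h
    exact h
  rw [← mul_inv_eq_one]
  convert congrArg (fun g => xgN N (n + 1) * g⁻¹ * (xgN N (n + 1))⁻¹) hrel using 1 <;> group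

noncomputable abbrev tailClosure : Subgroup (GroupHN N) :=
  Subgroup.normalClosure {g : GroupHN N | ∃ n : ℤ, N < n ∧ g = xgN N n}

theorem mk_xgN_of_lt {m : ℤ} (hm : N < m) : (xgN N m : GroupHN N ⧸ tailClosure N) = 1 :=
  (QuotientGroup.eq_one_iff _).2 (Subgroup.subset_normalClosure ⟨m, hm, rfl⟩)

theorem mk_ygN (n : ℤ) (hn : N ≤ n) :
    (ygN N ⟨n, hn⟩ : GroupHN N ⧸ tailClosure N) =
      (ygN N ⟨N, le_rfl⟩ : GroupHN N ⧸ tailClosure N) ^ ((n - N).negOnePow : ℤ) := by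
  induction n, hn using Int.leInduction with
  | base => simp
  | succ n hn ih =>
    rw [ygN_succ N n hn, QuotientGroup.mk_mul, QuotientGroup.mk_mul, QuotientGroup.mk_inv,
      QuotientGroup.mk_inv, mk_xgN_of_lt N (by omega), ih, Int.negOnePow_add_one_sub, Units.val_neg, zpow_neg]
    group

theorem mk_inclusion_retraction :
    (QuotientGroup.mk' (tailClosure N)).comp ((inclusion N).comp (retraction N)) =
      QuotientGroup.mk' (tailClosure N) := by
  refine PresentedGroup.ext fun a => ?_
  rcases a with m | ⟨n, hn⟩
  · show QuotientGroup.mk (inclusion N (retraction N (xgN N m))) =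
      (QuotientGroup.mk (xgN N m) : GroupHN N ⧸ tailClosure N)
    rw [retraction_xgN]
    split_ifs with hm
    · rw [inclusion_of_inl]
    · rw [map_one, QuotientGroup.mk_one, mk_xgN_of_lt N (by omega)]
  · show QuotientGroup.mk (inclusion N (retraction N (ygN N ⟨n, hn⟩))) =
      (QuotientGroup.mk (ygN N ⟨n, hn⟩) : GroupHN N ⧸ tailClosure N)
    rw [retraction_ygN, map_zpow, inclusion_of_inr, QuotientGroup.mk_zpow, mk_ygN N n hn]

theorem ker_retraction : (retraction N).ker = tailClosure N := by
  refine MonoidHom.ker_eq_of_le_of_mk_comp_eq _ _ _ ?_ (mk_inclusion_retraction N)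
  refine Subgroup.normalClosure_le_normal ?_
  rintro g ⟨n, hn, rfl⟩
  simp [retraction_xgN, show ¬n ≤ N by omega]

end GroupHN

/-- The quotient of `H_N` by the normal closure of `{x_n : n > N}` is isomorphic to the
free group on `{x_m}_{m ≤ N} ∪ {y_N}`; consequently `{x_m}_{m ≤ N} ∪ {y_N}` freely
generates a free subgroup of `H_N`. -/
theorem groupHN_quotient_free (N : ℤ) :
    Nonempty ((GroupHN N ⧸ Subgroup.normalClosure {g : GroupHN N | ∃ n : ℤ, N < n ∧ g = xgN N n})
        ≃* FreeGroup ({m : ℤ // m ≤ N} ⊕ Unit)) ∧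
    ∃ φ : FreeGroup ({m : ℤ // m ≤ N} ⊕ Unit) →* GroupHN N,
      Function.Injective φ ∧
      (∀ m : {m : ℤ // m ≤ N}, φ (FreeGroup.of (Sum.inl m)) = xgN N m) ∧
      φ (FreeGroup.of (Sum.inr ())) = ygN N ⟨N, le_refl N⟩ :=
  ⟨⟨(QuotientGroup.quotientMulEquivOfEq (GroupHN.ker_retraction N).symm).trans
      (QuotientGroup.quotientKerEquivOfRightInverse _ _
        (GroupHN.leftInverse_retraction_inclusion N))⟩,
    GroupHN.inclusion N, (GroupHN.leftInverse_retraction_inclusion N).injective,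
    GroupHN.inclusion_of_inl N, GroupHN.inclusion_of_inr N ()⟩
end

section
/- Let G be a group and Λ : G → ℕ a function satisfying Λ(1) ≤ 1, Λ(g) ≤ Λ(g⁻¹) + 1, and Λ(gh) ≤ max(Λ(g), Λ(h)) + 1 for all g, h ∈ G. Suppose there exist elements g₀, t₀, t ∈ G and a sequence (g_n)_{n∈ℕ} and elements (t_n)_{n∈ℕ} such that t_n g_n t_n⁻¹ = g_{n+1} and t t_n t⁻¹ = t_{n+1} for all n. If M ∈ ℕ bounds Λ(1), Λ(g₀), Λ(t₀), Λ(t₀⁻¹), Λ(t), Λ(t⁻¹), then Λ(g_n) ≤ M + 2n + 1 for all n ≥ 1. Consequently Λ cannot satisfy Λ(g_n) ≥ n² for all n. -/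
/-- De Cornulier-style length estimate: if `Λ : G → ℕ` satisfies `Λ(1) ≤ 1`,
`Λ(g) ≤ Λ(g⁻¹) + 1` and `Λ(gh) ≤ max(Λ(g), Λ(h)) + 1`, and `(g_n)`, `(t_n)`, `t`
satisfy `t_n g_n t_n⁻¹ = g_{n+1}` and `t t_n t⁻¹ = t_{n+1}`, with `M` bounding
`Λ(1), Λ(g₀), Λ(t₀), Λ(t₀⁻¹), Λ(t), Λ(t⁻¹)`, then `Λ(g_n) ≤ M + 2n + 1` for all
`n ≥ 1`; consequently `Λ(g_n) ≥ n²` for all `n` is impossible. -/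
theorem length_bound {G : Type*} [Group G] (Λ : G → ℕ)
    (h1 : Λ 1 ≤ 1)
    (hinv : ∀ g : G, Λ g ≤ Λ g⁻¹ + 1)
    (hmul : ∀ g h : G, Λ (g * h) ≤ max (Λ g) (Λ h) + 1)
    (g : ℕ → G) (ts : ℕ → G) (t : G)
    (hconj : ∀ n, ts n * g n * (ts n)⁻¹ = g (n + 1))
    (ht : ∀ n, t * ts n * t⁻¹ = ts (n + 1))
    (M : ℕ)
    (hM1 : Λ 1 ≤ M) (hMg : Λ (g 0) ≤ M) (hMt0 : Λ (ts 0) ≤ M)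
    (hMt0' : Λ (ts 0)⁻¹ ≤ M) (hMt : Λ t ≤ M) (hMt' : Λ t⁻¹ ≤ M) :
    (∀ n : ℕ, 1 ≤ n → Λ (g n) ≤ M + 2 * n + 1) ∧ ¬ (∀ n : ℕ, n ^ 2 ≤ Λ (g n)) := by
  have htn : ∀ n, ts n = t ^ n * ts 0 * (t ^ n)⁻¹ := by
    intro n
    induction n with
    | zero => simp
    | succ n ih =>
      rw [← ht n, ih, pow_succ']
      group
  have hpow : ∀ n, Λ (t ^ n) ≤ M + n := by
    intro n
    induction n with
    | zero => simpa using hM1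
    | succ n ih =>
      calc Λ (t ^ (n + 1)) = Λ (t ^ n * t) := by rw [pow_succ]
        _ ≤ max (Λ (t ^ n)) (Λ t) + 1 := hmul _ _
        _ ≤ M + n + 1 := by omega
  have hpowinv : ∀ n, Λ ((t ^ n)⁻¹) ≤ M + n := by
    intro n
    rw [← inv_pow]
    induction n with
    | zero => simpa using hM1
    | succ n ih =>
      calc Λ (t⁻¹ ^ (n + 1)) = Λ (t⁻¹ ^ n * t⁻¹) := by rw [pow_succ]
        _ ≤ max (Λ (t⁻¹ ^ n)) (Λ t⁻¹) + 1 := hmul _ _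
        _ ≤ M + n + 1 := by omega
  have hts : ∀ n, Λ (ts n) ≤ M + n + 2 := by
    intro n
    rw [htn n]
    calc Λ (t ^ n * ts 0 * (t ^ n)⁻¹)
        ≤ max (Λ (t ^ n * ts 0)) (Λ ((t ^ n)⁻¹)) + 1 := hmul _ _
      _ ≤ max (max (Λ (t ^ n)) (Λ (ts 0)) + 1) (Λ ((t ^ n)⁻¹)) + 1 := by
          have := hmul (t ^ n) (ts 0); omega
      _ ≤ M + n + 2 := by
          have := hpow n; have := hpowinv n; omega
  have hts' : ∀ n, Λ ((ts n)⁻¹) ≤ M + n + 2 := by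
    intro n
    have e : (ts n)⁻¹ = t ^ n * (ts 0)⁻¹ * (t ^ n)⁻¹ := by rw [htn n]; group
    rw [e]
    calc Λ (t ^ n * (ts 0)⁻¹ * (t ^ n)⁻¹)
        ≤ max (Λ (t ^ n * (ts 0)⁻¹)) (Λ ((t ^ n)⁻¹)) + 1 := hmul _ _
      _ ≤ max (max (Λ (t ^ n)) (Λ ((ts 0)⁻¹)) + 1) (Λ ((t ^ n)⁻¹)) + 1 := by
          have := hmul (t ^ n) (ts 0)⁻¹; omega
      _ ≤ M + n + 2 := by
          have := hpow n; have := hpowinv n; omega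
  have main : ∀ n : ℕ, 1 ≤ n → Λ (g n) ≤ M + 2 * n + 1 := by
    intro n hn
    induction n with
    | zero => omega
    | succ n ih =>
      have key : Λ (g (n + 1)) ≤ max (max (Λ (ts n)) (Λ (g n)) + 1) (Λ ((ts n)⁻¹)) + 1 := by
        rw [← hconj n]
        have := hmul (ts n * g n) ((ts n)⁻¹)
        have := hmul (ts n) (g n)
        omega
      rcases Nat.eq_zero_or_pos n with h0 | hpos
      · subst h0
        have := hts 0; have := hts' 0
        omega
      · have := ih hpos
        have := hts n; have := hts' n
        omega
  refine ⟨main, fun h => ?_⟩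
  have h1' := h (M + 3)
  have h2' := main (M + 3) (by omega)
  nlinarith [h1', h2']
end
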